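/- arXiv:1709.03315 — 2 statements merged into one kernel-verified Lean document; each statement's English description precedes it below -/
import Mathlib

section
/- Let β > 0, let h ∈ L^∞(0,1), and let ψ ∈ C²((0,1)) satisfy −ψ'' − (1/r)ψ' + (β²/r²)ψ = hψ on (0,1), ψ(r) → 0 as r → 1⁻, and ∫₀¹ r (ψ'(r))² dr < ∞. Assume in addition that either (a) ψ extends continuously to r = 0 with ψ(0) = 0, or (b) ∫₀¹ ψ(r)²/r dr < ∞. Then ψ is bounded on (0,1) and ψ(r) = O(r^β) as r → 0⁺. -/
open Real MeasureTheory Metric Set Asymptotics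

noncomputable section

abbrev Plane : Type := EuclideanSpace ℝ (Fin 2)

/-- The open unit ball in the plane. -/
def unitBall : Set Plane := Metric.ball 0 1

/-- The Laplacian of a function on the plane. -/
def lap (u : Plane → ℝ) (x : Plane) : ℝ :=
  ∑ i : Fin 2,
    fderiv ℝ (fun y => fderiv ℝ u y (EuclideanSpace.single i 1)) x (EuclideanSpace.single i 1)

/-- A classical solution of the Lane–Emden problem `(E_p)` in the unit ball. -/
structure IsSolution (p : ℝ) (u : Plane → ℝ) : Prop where
  smooth : ContDiffOn ℝ 2 u unitBall
  cont : ContinuousOn u (closure unitBall)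
  eqn : ∀ x ∈ unitBall, - lap u x = |u x| ^ (p - 1) * u x
  bdry : ∀ x ∈ frontier unitBall, u x = 0

def IsRadial (u : Plane → ℝ) : Prop := ∀ x y : Plane, ‖x‖ = ‖y‖ → u x = u y

def SignChanging (u : Plane → ℝ) : Prop :=
  (∃ x ∈ unitBall, 0 < u x) ∧ (∃ x ∈ unitBall, u x < 0)

def nodalSet (u : Plane → ℝ) : Set Plane := {x | x ∈ unitBall ∧ u x ≠ 0}

/-- `u` has exactly two nodal regions. -/
def HasTwoNodalRegions (u : Plane → ℝ) : Prop :=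
  {C : Set Plane | ∃ x ∈ nodalSet u, C = connectedComponentIn (nodalSet u) x}.ncard = 2

/-- The radial solution `u_p`: radial, two nodal regions, positive at the origin. -/
def IsRadialNodalSol (p : ℝ) (u : Plane → ℝ) : Prop :=
  IsSolution p u ∧ IsRadial u ∧ HasTwoNodalRegions u ∧ 0 < u 0

def rotMap (α : ℝ) : Plane → Plane := fun x =>
  (WithLp.equiv 2 (Fin 2 → ℝ)).symm ![Real.cos α * x 0 - Real.sin α * x 1,
    Real.sin α * x 0 + Real.cos α * x 1]

def reflMap : Plane → Plane := fun x =>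
  (WithLp.equiv 2 (Fin 2 → ℝ)).symm ![x 0, -(x 1)]

/-- Invariance under the dihedral group `G_k` generated by the rotation of angle `2π/k`
and the reflection with respect to the `x`-axis. -/
def GkInvariant (k : ℕ) (u : Plane → ℝ) : Prop :=
  (∀ x, u (rotMap (2 * Real.pi / k) x) = u x) ∧ ∀ x, u (reflMap x) = u x

def energy (p : ℝ) (u : Plane → ℝ) : ℝ :=
  (1 / 2) * (∫ x in unitBall, ‖fderiv ℝ u x‖ ^ 2)
    - (1 / (p + 1)) * ∫ x in unitBall, |u x| ^ (p + 1)

/-- A least energy sign-changing `G_k`-invariant solution of `(E_p)`. -/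
def IsLeastEnergyNodalGk (p : ℝ) (k : ℕ) (u : Plane → ℝ) : Prop :=
  IsSolution p u ∧ SignChanging u ∧ GkInvariant k u ∧
    ∀ v, IsSolution p v → SignChanging v → GkInvariant k v → energy p u ≤ energy p v

/-- A smooth function compactly supported in the unit ball. -/
def IsTestFun (v : Plane → ℝ) : Prop :=
  (∀ n : ℕ, ContDiff ℝ n v) ∧ HasCompactSupport v ∧ tsupport v ⊆ unitBall

def QForm (c : Plane → ℝ) (v : Plane → ℝ) : ℝ :=
  ∫ x in unitBall, (‖fderiv ℝ v x‖ ^ 2 - c x * (v x) ^ 2)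

def IsNegSubspace (P : (Plane → ℝ) → Prop) (c : Plane → ℝ)
    (W : Submodule ℝ (Plane → ℝ)) : Prop :=
  (∀ v ∈ W, IsTestFun v ∧ P v) ∧ ∀ v ∈ W, v ≠ 0 → QForm c v < 0

/-- `n` is the maximal dimension of a subspace of test functions satisfying `P` on which the
quadratic form with zero-order coefficient `c` is negative definite. -/
def HasMorseIdx (P : (Plane → ℝ) → Prop) (c : Plane → ℝ) (n : ℕ) : Prop :=
  (∃ W : Submodule ℝ (Plane → ℝ), IsNegSubspace P c W ∧ FiniteDimensional ℝ W ∧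
    Module.finrank ℝ W = n) ∧
  ∀ W : Submodule ℝ (Plane → ℝ), IsNegSubspace P c W → FiniteDimensional ℝ W →
    Module.finrank ℝ W ≤ n

def linCoeff (p : ℝ) (u : Plane → ℝ) : Plane → ℝ := fun x => p * |u x| ^ (p - 1)

def HasMorseIndex (p : ℝ) (u : Plane → ℝ) (n : ℕ) : Prop :=
  HasMorseIdx (fun _ => True) (linCoeff p u) n

def HasRadialMorseIndex (p : ℝ) (u : Plane → ℝ) (n : ℕ) : Prop :=
  HasMorseIdx IsRadial (linCoeff p u) n

def HasKMorseIndex (k : ℕ) (p : ℝ) (u : Plane → ℝ) (n : ℕ) : Prop :=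
  HasMorseIdx (GkInvariant k) (linCoeff p u) n

def supNorm (u : Plane → ℝ) : ℝ := ⨆ x ∈ closure unitBall, |u x|

/-- A classical solution of the problem obtained linearizing `(E_p)` at `u`. -/
def IsLinearizedSol (p : ℝ) (u v : Plane → ℝ) : Prop :=
  ContDiffOn ℝ 2 v unitBall ∧ ContinuousOn v (closure unitBall) ∧
    (∀ x ∈ unitBall, - lap v x = p * |u x| ^ (p - 1) * v x) ∧
    ∀ x ∈ frontier unitBall, v x = 0

/-- The first eigenvalue `β₁(p)` of the singular weighted problem. -/
def beta1 (p : ℝ) (u : Plane → ℝ) : ℝ :=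
  sInf {t : ℝ | ∃ v : Plane → ℝ, IsTestFun v ∧ tsupport v ⊆ unitBall \ {0} ∧ v ≠ 0 ∧
    t = QForm (linCoeff p u) v / ∫ x in unitBall, (v x) ^ 2 / ‖x‖ ^ 2}

/-- `φ` is a radial Dirichlet eigenfunction of `-Δ` in the unit ball, with eigenvalue `lam`. -/
def IsRadialDirichletEigPair (lam : ℝ) (φ : Plane → ℝ) : Prop :=
  ContDiffOn ℝ 2 φ unitBall ∧ ContinuousOn φ (closure unitBall) ∧ IsRadial φ ∧
    (∃ x ∈ unitBall, φ x ≠ 0) ∧ (∀ x ∈ unitBall, - lap φ x = lam * φ x) ∧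
    ∀ x ∈ frontier unitBall, φ x = 0

def IsRadialDirichletEig (lam : ℝ) : Prop := ∃ φ, IsRadialDirichletEigPair lam φ

/-- `lam` is the second smallest radial Dirichlet eigenvalue of `-Δ` in the unit ball. -/
def IsSecondRadialEig (lam : ℝ) : Prop :=
  IsRadialDirichletEig lam ∧
    ∃ lam1, IsRadialDirichletEig lam1 ∧ lam1 < lam ∧
      ∀ mu, IsRadialDirichletEig mu → mu = lam1 ∨ lam ≤ mu

def mkPt (a b : ℝ) : Plane := (WithLp.equiv 2 (Fin 2 → ℝ)).symm ![a, b]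



/-!
Write `L = -∂² - r⁻¹ ∂ + β² r⁻²` for the operator of the equation. Since `|h| ≤ M` a.e. and both
sides of the equation are continuous, `|L ψ| ≤ M |ψ|` everywhere on `(0, 1)`.

Both alternative hypotheses give `ψ(0⁺) = 0`: under the integrability one, `(ψ²)' = 2 ψ ψ'` is
integrable because `2 |ψ ψ'| ≤ ψ² / r + r ψ'²`, so `ψ²` has a limit at `0`, and this limit vanishes
because `ψ² / r` is integrable while `1 / r` is not.

The barrier `W = r ^ β - c r ^ (β + 2)`, with `c = M / (4 (β + 1))`, satisfies
`L W = 4 c (β + 1) r ^ β ≥ M W`. If `M δ² < β²`, a positive interior maximum `x` of `±ψ - A W` on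
`(0, δ]` is impossible, since there `β² / x² (±ψ - A W) ≤ L (±ψ - A W) ≤ M (±ψ - A W)`. Hence
`|ψ| ≤ A W ≤ A r ^ β` near `0`, and boundedness follows from `ψ(0⁺) = ψ(1⁻) = 0`.
-/

open Filter Topology

theorem le_on_open_of_ae_le {X : Type*} [TopologicalSpace X] [MeasurableSpace X]
    {μ : Measure X} [μ.IsOpenPosMeasure] {U : Set X} {f g : X → ℝ} (hU : IsOpen U)
    (hf : ContinuousOn f U) (hg : ContinuousOn g U) (hfg : ∀ᵐ x ∂μ.restrict U, f x ≤ g x) :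
    ∀ x ∈ U, f x ≤ g x := fun _ hx =>
  min_eq_left_iff.1 <| Measure.eqOn_open_of_ae_eq (hfg.mono fun _ => min_eq_left) hU
    (hf.inf hg) hf hx

theorem abs_le_mul_abs_of_eq_mul {X : Type*} [TopologicalSpace X] [MeasurableSpace X]
    [OpensMeasurableSpace X] {μ : Measure X} [μ.IsOpenPosMeasure] {U : Set X} {F g h : X → ℝ}
    {C : ℝ} (hU : IsOpen U) (hF : ContinuousOn F U) (hg : ContinuousOn g U)
    (hFg : ∀ x ∈ U, F x = h x * g x) (hh : ∀ᵐ x ∂μ.restrict U, |h x| ≤ C) :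
    ∀ x ∈ U, |F x| ≤ C * |g x| := by
  refine le_on_open_of_ae_le (μ := μ) hU hF.abs (continuousOn_const.mul hg.abs) ?_
  filter_upwards [hh, ae_restrict_mem hU.measurableSet] with x hhx hx
  rw [hFg x hx, abs_mul]
  exact mul_le_mul_of_nonneg_right hhx (abs_nonneg _)

theorem ContinuousOn.exists_norm_le_of_tendsto {E : Type*} [SeminormedAddCommGroup E]
    {f : ℝ → E} {a b : ℝ} {la lb : E} (hf : ContinuousOn f (Ioo a b))
    (ha : Tendsto f (𝓝[>] a) (𝓝 la)) (hb : Tendsto f (𝓝[<] b) (𝓝 lb)) :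
    ∃ C, ∀ x ∈ Ioo a b, ‖f x‖ ≤ C := by
  obtain ⟨u, hau, hu⟩ := mem_nhdsGT_iff_exists_Ioo_subset.1
    (ha.norm.eventually (gt_mem_nhds (lt_add_one ‖la‖)))
  obtain ⟨v, hvb, hv⟩ := mem_nhdsLT_iff_exists_Ioo_subset.1
    (hb.norm.eventually (gt_mem_nhds (lt_add_one ‖lb‖)))
  obtain ⟨K, hK⟩ := isCompact_Icc.exists_bound_of_continuousOn
    (hf.mono (Icc_subset_Ioo hau hvb))
  refine ⟨max (max (‖la‖ + 1) (‖lb‖ + 1)) K, fun x hx => ?_⟩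
  rcases lt_or_ge x u with hxu | hux
  · exact (hu ⟨hx.1, hxu⟩ : ‖f x‖ < _).le.trans ((le_max_left _ _).trans (le_max_left _ _))
  rcases lt_or_ge v x with hvx | hxv
  · exact (hv ⟨hvx, hx.2⟩ : ‖f x‖ < _).le.trans ((le_max_right _ _).trans (le_max_left _ _))
  · exact (hK x ⟨hux, hxv⟩).trans (le_max_right _ _)

theorem exists_tendsto_nhdsGT_of_hasDerivAt {E : Type*} [NormedAddCommGroup E]
    [NormedSpace ℝ E] [CompleteSpace E] {g g' : ℝ → E} {a b : ℝ} (hab : a < b)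
    (hg : ∀ x ∈ Ioo a b, HasDerivAt g (g' x) x) (hg' : IntegrableOn g' (Ioo a b)) :
    ∃ L, Tendsto g (𝓝[>] a) (𝓝 L) := by
  obtain ⟨m, ham, hmb⟩ := exists_between hab
  have hint : IntegrableOn g' (uIcc a m) := by
    rw [uIcc_of_le ham.le, integrableOn_Icc_iff_integrableOn_Ioo]
    exact hg'.mono_set (Ioo_subset_Ioo_right hmb.le)
  have hprim : Tendsto (fun x => ∫ t in x..m, g' t) (𝓝[>] a) (𝓝 (∫ t in a..m, g' t)) := by
    have := intervalIntegral.continuousOn_primitive_interval_left hint a left_mem_uIcc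
    rw [uIcc_of_le ham.le] at this
    exact this.tendsto.mono_left (nhdsWithin_le_of_mem (Icc_mem_nhdsGT ham))
  refine ⟨g m - ∫ t in a..m, g' t, (tendsto_const_nhds.sub hprim).congr' ?_⟩
  filter_upwards [Ioo_mem_nhdsGT ham] with x hx
  have hsub : uIcc x m ⊆ Ioo a b := by
    rw [uIcc_of_le hx.2.le]; exact Icc_subset_Ioo hx.1 hmb
  rw [intervalIntegral.integral_eq_sub_of_hasDerivAt (fun y hy => hg y (hsub hy))
    ((hint.mono_set ?_).intervalIntegrable)]
  · abel
  · rw [uIcc_of_le hx.2.le, uIcc_of_le ham.le]; exact Icc_subset_Icc_left hx.1.le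

theorem eq_zero_of_tendsto_of_integrableOn_div {g : ℝ → ℝ} {L b : ℝ} (hb : 0 < b)
    (hg : Tendsto g (𝓝[>] 0) (𝓝 L)) (hint : IntegrableOn (fun x => g x / x) (Ioo 0 b)) :
    L = 0 := by
  by_contra hL
  obtain ⟨ε, hε, hεsub⟩ := mem_nhdsGT_iff_exists_Ioo_subset.1
    (hg.abs.eventually (lt_mem_nhds (half_lt_self (abs_pos.2 hL))))
  set η := min ε b
  have hη : 0 < η := lt_min hε hb
  have hinv : IntegrableOn (fun x : ℝ => x⁻¹) (Ioo 0 η) := by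
    refine ((hint.mono_set (Ioo_subset_Ioo_right (min_le_right ε b))).norm.const_mul
      (2 / |L|)).mono' (by fun_prop) ?_
    filter_upwards [ae_restrict_mem measurableSet_Ioo] with x hx
    have hgx : |L| / 2 < |g x| := hεsub ⟨hx.1, hx.2.trans_le (min_le_left _ _)⟩
    rw [Real.norm_eq_abs, Real.norm_eq_abs, abs_inv, abs_div, abs_of_pos hx.1, inv_eq_one_div,
      ← mul_div_assoc, div_le_div_iff_of_pos_right hx.1, div_mul_eq_mul_div,
      le_div_iff₀ (abs_pos.2 hL)]
    linarith
  have := (intervalIntegrable_iff_integrableOn_Ioo_of_le hη.le).2 hinv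
  simp [hη.ne, hη.le] at this

theorem tendsto_nhdsGT_zero_of_integrableOn_energy {f : ℝ → ℝ} {b : ℝ} (hb : 0 < b)
    (hf : DifferentiableOn ℝ f (Ioo 0 b))
    (hf' : IntegrableOn (fun r => r * deriv f r ^ 2) (Ioo 0 b))
    (hf0 : IntegrableOn (fun r => f r ^ 2 / r) (Ioo 0 b)) :
    Tendsto f (𝓝[>] 0) (𝓝 0) := by
  have hderiv : ∀ r ∈ Ioo 0 b, HasDerivAt (fun r => f r ^ 2) (2 * f r * deriv f r) r := by
    intro r hr
    simpa [mul_comm, mul_assoc, mul_left_comm] using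
      ((hf.differentiableAt (isOpen_Ioo.mem_nhds hr)).hasDerivAt.fun_pow 2)
  have hdom : ∀ r ∈ Ioo 0 b, ‖2 * f r * deriv f r‖ ≤ f r ^ 2 / r + r * deriv f r ^ 2 := by
    intro r hr
    rw [Real.norm_eq_abs, abs_mul, abs_mul, abs_two, div_add' _ _ _ hr.1.ne', le_div_iff₀ hr.1]
    have := two_mul_le_add_sq |f r| (r * |deriv f r|)
    rw [mul_pow, sq_abs, sq_abs] at this
    linarith
  have hint : IntegrableOn (fun r => 2 * f r * deriv f r) (Ioo 0 b) := by
    refine (hf0.add hf').mono' ?_ ((ae_restrict_iff' measurableSet_Ioo).2 (ae_of_all _ hdom))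
    exact ((continuousOn_const.mul hf.continuousOn).aestronglyMeasurable measurableSet_Ioo).mul
      (measurable_deriv f).aestronglyMeasurable.restrict
  obtain ⟨L, hL⟩ := exists_tendsto_nhdsGT_of_hasDerivAt hb hderiv hint
  have hL0 : L = 0 := eq_zero_of_tendsto_of_integrableOn_div hb hL hf0
  subst hL0
  have := (Real.continuous_sqrt.tendsto 0).comp hL
  simp only [Function.comp_def, Real.sqrt_sq_eq_abs, Real.sqrt_zero] at this
  exact (tendsto_zero_iff_abs_tendsto_zero f).2 this

/-- In polar coordinates, `-Δ (f(r) cos βθ) = besselOp β f r * cos βθ`. -/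
def besselOp (β : ℝ) (f : ℝ → ℝ) (r : ℝ) : ℝ :=
  -(deriv (deriv f) r) - (1 / r) * deriv f r + (β ^ 2 / r ^ 2) * f r

section besselOp

variable {β r : ℝ} {f g : ℝ → ℝ}

theorem besselOp_sub (hf : ContDiffAt ℝ 2 f r) (hg : ContDiffAt ℝ 2 g r) :
    besselOp β (f - g) r = besselOp β f r - besselOp β g r := by
  have h1 : deriv (f - g) r = deriv f r - deriv g r :=
    deriv_sub (hf.differentiableAt two_ne_zero) (hg.differentiableAt two_ne_zero)
  have h2 : deriv (deriv (f - g)) r = deriv (deriv f) r - deriv (deriv g) r := by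
    simpa only [iteratedDeriv_succ, iteratedDeriv_zero] using iteratedDeriv_sub hf hg
  simp only [besselOp, h1, h2, Pi.sub_apply]
  ring

theorem besselOp_const_mul (a : ℝ) : besselOp β (fun r => a * f r) r = a * besselOp β f r := by
  simp only [besselOp, deriv_const_mul_field']
  ring

theorem besselOp_neg : besselOp β (fun r => -f r) r = -besselOp β f r := by
  simp only [besselOp, deriv.fun_neg']
  ring

theorem besselOp_rpow (hr : 0 < r) (γ : ℝ) :
    besselOp β (fun r => r ^ γ) r = (β ^ 2 - γ ^ 2) * r ^ (γ - 2) := by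
  have h1 : r ^ (γ - 1) = r * r ^ (γ - 2) := by
    rw [show γ - 1 = γ - 2 + 1 by ring, Real.rpow_add_one hr.ne', mul_comm]
  have h2 : r ^ γ = r ^ 2 * r ^ (γ - 2) := by
    rw [← Real.rpow_natCast, ← Real.rpow_add hr]; norm_num
  simp only [besselOp, Real.deriv_rpow_const', deriv_const_mul_field',
    show γ - 1 - 1 = γ - 2 by ring, h1, h2]
  field_simp
  ring

theorem ContDiffOn.continuousOn_besselOp {s : Set ℝ}
    (hf : ContDiffOn ℝ 2 f s) (hs : IsOpen s) (hs0 : (0 : ℝ) ∉ s) :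
    ContinuousOn (besselOp β f) s := by
  have hf' : ContDiffOn ℝ 1 (deriv f) s := hf.deriv_of_isOpen hs (by norm_num)
  have hne : ∀ r ∈ s, r ≠ 0 := fun r hr h => hs0 (h ▸ hr)
  exact ((hf'.continuousOn_deriv_of_isOpen hs le_rfl).neg.sub
    ((continuousOn_const.div continuousOn_id hne).mul hf'.continuousOn)).add
    ((continuousOn_const.div (continuousOn_id.pow 2) fun r hr => pow_ne_zero 2 (hne r hr)).mul
      hf.continuousOn)

end besselOp

def barrier (β c r : ℝ) : ℝ := r ^ β - c * r ^ (β + 2)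

section barrier

variable {β c r : ℝ}

theorem barrier_eq (hr : 0 < r) : barrier β c r = r ^ β * (1 - c * r ^ 2) := by
  rw [barrier, Real.rpow_add hr, Real.rpow_two]; ring

theorem contDiffAt_barrier (hr : 0 < r) : ContDiffAt ℝ 2 (barrier β c) r :=
  (Real.contDiffAt_rpow_const_of_ne hr.ne').sub
    (contDiffAt_const.mul (Real.contDiffAt_rpow_const_of_ne hr.ne'))

theorem besselOp_barrier (hr : 0 < r) :
    besselOp β (barrier β c) r = 4 * c * (β + 1) * r ^ β := by
  have hpow : ∀ γ : ℝ, ContDiffAt ℝ 2 (fun r : ℝ => r ^ γ) r :=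
    fun _ => Real.contDiffAt_rpow_const_of_ne hr.ne'
  have : barrier β c = (fun r => r ^ β) - fun r => c * r ^ (β + 2) := rfl
  rw [this, besselOp_sub (hpow β) (contDiffAt_const.mul (hpow _)), besselOp_const_mul,
    besselOp_rpow hr, besselOp_rpow hr, add_sub_cancel_right]
  ring

theorem tendsto_barrier_zero (hβ : 0 < β) : Tendsto (barrier β c) (𝓝[>] 0) (𝓝 0) := by
  have hpow : ∀ γ : ℝ, 0 < γ → Tendsto (fun r : ℝ => r ^ γ) (𝓝[>] 0) (𝓝 0) := fun γ hγ => by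
    simpa [Real.zero_rpow hγ.ne'] using
      (Real.continuousAt_rpow_const 0 γ (Or.inr hγ.le)).tendsto.mono_left nhdsWithin_le_nhds
  have := (hpow β hβ).sub ((hpow (β + 2) (by linarith)).const_mul c)
  rwa [mul_zero, sub_zero] at this

end barrier

theorem IsLocalMax.deriv_deriv_nonpos {f : ℝ → ℝ} {x : ℝ} (hf : IsLocalMax f x)
    (hc : ContinuousAt f x) : deriv (deriv f) x ≤ 0 := by
  by_contra! hpos
  have hmin := isLocalMin_of_deriv_deriv_pos hpos hf.deriv_eq_zero hc
  have hconst : f =ᶠ[𝓝 x] fun _ => f x := (hf.and hmin).mono fun _ hy => le_antisymm hy.1 hy.2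
  have : deriv (deriv f) x = 0 := by
    rw [hconst.deriv.deriv_eq]
    simp
  exact hpos.ne' this

theorem IsLocalMax.besselOp_ge {β x : ℝ} {f : ℝ → ℝ} (hf : IsLocalMax f x)
    (hc : ContinuousAt f x) : β ^ 2 / x ^ 2 * f x ≤ besselOp β f x := by
  have := hf.deriv_deriv_nonpos hc
  simp only [besselOp, hf.deriv_eq_zero]
  linarith

theorem exists_isLocalMax_pos_of_tendsto_zero {V : ℝ → ℝ} {δ r : ℝ}
    (hV : ContinuousOn V (Ioc 0 δ)) (h0 : Tendsto V (𝓝[>] 0) (𝓝 0)) (hδ : V δ ≤ 0)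
    (hr : r ∈ Ioc 0 δ) (hVr : 0 < V r) : ∃ x ∈ Ioo 0 δ, IsLocalMax V x ∧ 0 < V x := by
  obtain ⟨u, hu, hsmall⟩ := mem_nhdsGT_iff_exists_Ioo_subset.1 (h0.eventually_lt_const hVr)
  obtain ⟨a, ha0, ha⟩ := exists_between (lt_min hr.1 hu)
  have har : a < r := ha.trans_le (min_le_left _ _)
  have hau : a < u := ha.trans_le (min_le_right _ _)
  obtain ⟨x, hx, hxmax⟩ := isCompact_Icc.exists_isMaxOn ⟨r, har.le, hr.2⟩
    (hV.mono (Icc_subset_Ioc_iff (har.trans_le hr.2).le |>.2 ⟨ha0, le_rfl⟩))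
  have hVx : 0 < V x := hVr.trans_le (hxmax ⟨har.le, hr.2⟩)
  have hxδ : x < δ := hx.2.lt_of_ne fun h => by rw [h] at hVx; linarith
  have hx0 : 0 < x := ha0.trans_le hx.1
  refine ⟨x, ⟨hx0, hxδ⟩, Filter.eventually_of_mem (Ioo_mem_nhds hx0 hxδ) fun y hy => ?_, hVx⟩
  rcases le_or_gt y a with hya | hay
  · exact (hsmall ⟨hy.1, hya.trans_lt hau⟩ : V y < V r).le.trans (hxmax ⟨har.le, hr.2⟩)
  · exact hxmax ⟨hay.le, hy.2.le⟩

section comparison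

variable {β M c A δ b : ℝ} {φ : ℝ → ℝ}

theorem le_barrier_of_besselOp_le (hβ : 0 < β) (hM : 0 ≤ M) (hMc : M ≤ 4 * c * (β + 1))
    (hδb : δ < b) (hMδ : M * δ ^ 2 < β ^ 2) (hcδ : c * δ ^ 2 ≤ 1) (hA : 0 ≤ A)
    (hφ : ContDiffOn ℝ 2 φ (Ioo 0 b)) (hL : ∀ r ∈ Ioo 0 δ, besselOp β φ r ≤ M * |φ r|)
    (h0 : Tendsto φ (𝓝[>] 0) (𝓝 0)) (hφδ : φ δ ≤ A * barrier β c δ) :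
    ∀ r ∈ Ioc 0 δ, φ r ≤ A * barrier β c r := by
  set W := fun r => A * barrier β c r
  intro r hr
  by_contra! hr'
  have hφat : ∀ x ∈ Ioo 0 δ, ContDiffAt ℝ 2 φ x :=
    fun x hx => hφ.contDiffAt (Ioo_mem_nhds hx.1 (hx.2.trans hδb))
  have hWat : ∀ x, 0 < x → ContDiffAt ℝ 2 W x :=
    fun x hx => contDiffAt_const.mul (contDiffAt_barrier hx)
  have hVc : ContinuousOn (φ - W) (Ioc 0 δ) := fun x hx =>
    ((hφ.continuousOn.continuousAt (Ioo_mem_nhds hx.1 (hx.2.trans_lt hδb))).sub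
      (hWat x hx.1).continuousAt).continuousWithinAt
  have hV0 : Tendsto (φ - W) (𝓝[>] 0) (𝓝 0) := by
    have := h0.sub ((tendsto_barrier_zero (c := c) hβ).const_mul A)
    rwa [mul_zero, sub_zero] at this
  obtain ⟨x, hx, hmax, hVx⟩ := exists_isLocalMax_pos_of_tendsto_zero hVc hV0
    (sub_nonpos.2 hφδ) hr (sub_pos.2 hr')
  have hmax' := hmax.besselOp_ge (β := β) ((hφat x hx).sub (hWat x hx.1)).continuousAt
  rw [besselOp_sub (hφat x hx) (hWat x hx.1), besselOp_const_mul, besselOp_barrier hx.1]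
    at hmax'
  have hxδ : x ^ 2 ≤ δ ^ 2 := pow_le_pow_left₀ hx.1.le hx.2.le 2
  have hc : 0 ≤ c := by nlinarith
  have hxβ : 0 ≤ x ^ β := Real.rpow_nonneg hx.1.le β
  obtain ⟨hW0, hWle⟩ : 0 ≤ W x ∧ W x ≤ A * x ^ β := by
    have hcx : c * x ^ 2 ≤ 1 := (mul_le_mul_of_nonneg_left hxδ hc).trans hcδ
    simp only [W, barrier_eq hx.1]
    constructor
    · exact mul_nonneg hA (mul_nonneg hxβ (by linarith))
    · exact mul_le_mul_of_nonneg_left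
        (by nlinarith [mul_nonneg hxβ (mul_nonneg hc (sq_nonneg x))]) hA
  simp only [Pi.sub_apply] at hVx hmax'
  have hφx : 0 < φ x := by linarith
  have hMx : M < β ^ 2 / x ^ 2 := by
    rw [lt_div_iff₀ (pow_pos hx.1 2)]
    exact (mul_le_mul_of_nonneg_left hxδ hM).trans_lt hMδ
  have hMW : M * W x ≤ A * (4 * c * (β + 1) * x ^ β) :=
    (mul_le_mul_of_nonneg_left hWle hM).trans (by nlinarith [mul_nonneg hA hxβ])
  have : β ^ 2 / x ^ 2 * (φ x - W x) ≤ M * (φ x - W x) :=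
    calc β ^ 2 / x ^ 2 * (φ x - W x)
        ≤ besselOp β φ x - A * (4 * c * (β + 1) * x ^ β) := hmax'
      _ ≤ M * φ x - M * W x := by linarith [abs_of_pos hφx ▸ hL x hx]
      _ = M * (φ x - W x) := by ring
  exact this.not_gt (mul_lt_mul_of_pos_right hMx hVx)

theorem abs_le_barrier_of_abs_besselOp_le (hβ : 0 < β) (hM : 0 ≤ M)
    (hMc : M ≤ 4 * c * (β + 1)) (hδb : δ < b) (hMδ : M * δ ^ 2 < β ^ 2)
    (hcδ : c * δ ^ 2 ≤ 1) (hA : 0 ≤ A) (hφ : ContDiffOn ℝ 2 φ (Ioo 0 b))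
    (hL : ∀ r ∈ Ioo 0 δ, |besselOp β φ r| ≤ M * |φ r|) (h0 : Tendsto φ (𝓝[>] 0) (𝓝 0))
    (hφδ : |φ δ| ≤ A * barrier β c δ) :
    ∀ r ∈ Ioc 0 δ, |φ r| ≤ A * barrier β c r := by
  intro r hr
  refine abs_le.2 ⟨?_, ?_⟩
  · refine neg_le.1 (le_barrier_of_besselOp_le hβ hM hMc hδb hMδ hcδ hA hφ.neg
      (fun r hr => ?_) (by simpa using h0.neg) ((neg_le_abs _).trans hφδ) r hr)
    rw [besselOp_neg, abs_neg]
    exact (neg_le_abs _).trans (hL r hr)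
  · exact le_barrier_of_besselOp_le hβ hM hMc hδb hMδ hcδ hA hφ
      (fun r hr => (le_abs_self _).trans (hL r hr)) h0 ((le_abs_self _).trans hφδ) r hr

end comparison

theorem isBigO_rpow_of_abs_besselOp_le {β M b : ℝ} {ψ : ℝ → ℝ} (hβ : 0 < β) (hM : 0 ≤ M)
    (hb : 0 < b) (hψ : ContDiffOn ℝ 2 ψ (Ioo 0 b))
    (hL : ∀ r ∈ Ioo 0 b, |besselOp β ψ r| ≤ M * |ψ r|) (h0 : Tendsto ψ (𝓝[>] 0) (𝓝 0)) :
    ψ =O[𝓝[>] 0] fun r => r ^ β := by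
  set c := M / (4 * (β + 1))
  have hMc : M ≤ 4 * c * (β + 1) := by
    rw [mul_comm 4 c, mul_assoc, div_mul_cancel₀ _ (by positivity)]
  have hsq : Tendsto (fun δ : ℝ => δ ^ 2) (𝓝[>] 0) (𝓝 0) := by
    simpa using ((continuous_pow 2).tendsto (0 : ℝ)).mono_left nhdsWithin_le_nhds
  have hsmall : ∀ᶠ δ in 𝓝[>] (0 : ℝ), 0 < δ ∧ δ < b ∧ M * δ ^ 2 < β ^ 2 ∧ c * δ ^ 2 < 1 := by
    filter_upwards [self_mem_nhdsWithin, nhdsWithin_le_nhds (gt_mem_nhds hb),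
      (hsq.const_mul M).eventually (gt_mem_nhds (show M * 0 < β ^ 2 by simpa using pow_pos hβ 2)),
      (hsq.const_mul c).eventually (gt_mem_nhds (show c * 0 < 1 by simp))] with δ h1 h2 h3 h4
    exact ⟨h1, h2, h3, h4⟩
  obtain ⟨δ, hδ, hδb, hMδ, hcδ⟩ := hsmall.exists
  have hWδ : 0 < barrier β c δ := by
    rw [barrier_eq hδ]; exact mul_pos (Real.rpow_pos_of_pos hδ β) (by linarith)
  set A := |ψ δ| / barrier β c δ
  have hbound := abs_le_barrier_of_abs_besselOp_le hβ hM hMc hδb hMδ hcδ.le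
    (div_nonneg (abs_nonneg _) hWδ.le) hψ (fun r hr => hL r ⟨hr.1, hr.2.trans hδb⟩) h0
    (div_mul_cancel₀ _ hWδ.ne').ge
  refine IsBigO.of_bound A ?_
  have hc : 0 ≤ c := by positivity
  filter_upwards [Ioo_mem_nhdsGT hδ] with r hr
  rw [Real.norm_eq_abs, Real.norm_eq_abs, abs_of_pos (Real.rpow_pos_of_pos hr.1 β)]
  refine (hbound r ⟨hr.1, hr.2.le⟩).trans (mul_le_mul_of_nonneg_left ?_ (by positivity))
  exact sub_le_self _ (mul_nonneg hc (Real.rpow_nonneg hr.1.le _))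

theorem singular_ode_boundedness_and_decay (β : ℝ) (hβ : 0 < β) (h ψ : ℝ → ℝ)
    (hh : MemLp h ⊤ (volume.restrict (Set.Ioo (0 : ℝ) 1)))
    (hψ : ContDiffOn ℝ 2 ψ (Set.Ioo (0 : ℝ) 1))
    (heq : ∀ r ∈ Set.Ioo (0 : ℝ) 1,
      -(deriv (deriv ψ) r) - (1 / r) * deriv ψ r + (β ^ 2 / r ^ 2) * ψ r = h r * ψ r)
    (hbd : Filter.Tendsto ψ (nhdsWithin 1 (Set.Iio 1)) (nhds 0))
    (hint : IntegrableOn (fun r => r * (deriv ψ r) ^ 2) (Set.Ioo (0 : ℝ) 1))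
    (hcond : Filter.Tendsto ψ (nhdsWithin 0 (Set.Ioi 0)) (nhds 0) ∨
      IntegrableOn (fun r => (ψ r) ^ 2 / r) (Set.Ioo (0 : ℝ) 1)) :
    (∃ C : ℝ, ∀ r ∈ Set.Ioo (0 : ℝ) 1, |ψ r| ≤ C) ∧
      ψ =O[nhdsWithin 0 (Set.Ioi 0)] fun r => r ^ β := by
  have h0 : Tendsto ψ (𝓝[>] 0) (𝓝 0) := hcond.elim id
    (tendsto_nhdsGT_zero_of_integrableOn_energy one_pos (hψ.differentiableOn two_ne_zero) hint)
  have hL : ∀ r ∈ Ioo (0 : ℝ) 1,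
      |besselOp β ψ r| ≤ lpNorm h ⊤ (volume.restrict (Ioo 0 1)) * |ψ r| :=
    abs_le_mul_abs_of_eq_mul isOpen_Ioo (hψ.continuousOn_besselOp isOpen_Ioo (by simp))
      hψ.continuousOn heq (by simpa only [Real.norm_eq_abs] using ae_le_lpNorm_exponent_top hh)
  refine ⟨?_, isBigO_rpow_of_abs_besselOp_le hβ lpNorm_nonneg one_pos hψ hL h0⟩
  simpa only [Real.norm_eq_abs] using hψ.continuousOn.exists_norm_le_of_tendsto h0 hbd
end
end

section
/- For every p > 1, u_p is radially nondegenerate: every radial classical solution v ∈ C²(B) ∩ C(B̄) of the linearized problem −Δv = p|u_p|^{p−1}v in B, v = 0 on ∂B, is identically zero. -/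
open Real MeasureTheory Metric Set Asymptotics

noncomputable section

/-! Write `f(r) = u(r e₀)` and `q(r) = v(r e₀)` for the profiles along the first axis; both solve
`y'' + y'/r + m y = 0` on `(0, 1)`, with `m = |f|^{p-1}` and `m = p |f|^{p-1}` respectively. The
scaling `λ ↦ λ^{2/(p-1)} f(λ r)` preserves the first equation, so its derivative at `λ = 1`,
`w = r f' + 2 f / (p - 1)`, solves the second. The Wronskian `r (q w' - w q')` is constant and
vanishes at `r = 0`. At `r = 1`, `q = 0` while `w = f'(1) ≠ 0` (otherwise `f ≡ 0` by uniqueness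
for the Cauchy problem at `r = 1`). Hence `q / w` is a constant tending to `0`, so `q` vanishes
near `1`, and then everywhere by the same uniqueness, which follows from the energy estimate
`(y² + y'²)' ≥ -K (y² + y'²)` away from `r = 0`. -/

open Filter Topology

section Calculus

variable {a b : ℝ}

lemma hasDerivAt_abs_rpow_sub_one_mul {p : ℝ} (hp : 1 < p) (t : ℝ) :
    HasDerivAt (fun s => |s| ^ (p - 1) * s) (p * |t| ^ (p - 1)) t := by
  have hpos : ∀ t > 0, HasDerivAt (fun s => |s| ^ (p - 1) * s) (p * |t| ^ (p - 1)) t := by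
    intro t ht
    rw [abs_of_pos ht]
    refine (hasDerivAt_rpow_const (Or.inl ht.ne')).congr_of_eventuallyEq ?_
    filter_upwards [eventually_gt_nhds ht] with s hs
    rw [abs_of_pos hs, ← rpow_add_one hs.ne', sub_add_cancel]
  rcases lt_trichotomy t 0 with ht | rfl | ht
  · have hodd : (fun s : ℝ => |s| ^ (p - 1) * s) = fun s => -(|(-s)| ^ (p - 1) * -s) := by
      ext s; rw [abs_neg]; ring
    rw [hodd, ← abs_neg t]
    exact ((hpos (-t) (neg_pos.2 ht)).comp t (hasDerivAt_neg t)).neg.congr_deriv (by ring)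
  · have hzero : |(0 : ℝ)| ^ (p - 1) = 0 := by simp [(by linarith : p - 1 ≠ 0)]
    have hc : ContinuousAt (fun s : ℝ => |s| ^ (p - 1)) 0 :=
      continuous_abs.continuousAt.rpow_const (Or.inr (by linarith))
    have hslope : Tendsto (fun s : ℝ => |s| ^ (p - 1)) (𝓝[≠] 0) (𝓝 0) := by
      simpa only [hzero] using hc.tendsto.mono_left nhdsWithin_le_nhds
    rw [hasDerivAt_iff_tendsto_slope_zero]
    simp only [hzero, mul_zero, zero_add, sub_zero, smul_eq_mul]
    refine hslope.congr' ?_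
    filter_upwards [self_mem_nhdsWithin] with s (hs : s ≠ 0)
    field_simp
  · exact hpos t ht

lemma tendsto_nhdsLT_of_continuousOn_Icc {g : ℝ → ℝ} (hg : ContinuousOn g (Icc a b))
    (hab : a < b) : Tendsto g (𝓝[<] b) (𝓝 (g b)) :=
  (hg b (right_mem_Icc.2 hab.le)).tendsto.mono_left
    (nhdsWithin_le_of_mem (mem_of_superset (Ioo_mem_nhdsLT hab) Ioo_subset_Icc_self))

lemma exists_tendsto_nhdsLT_of_hasDerivAt {F G : ℝ → ℝ} (hab : a < b)
    (hF : ∀ r ∈ Ico a b, HasDerivAt F (G r) r) (hG : ContinuousOn G (Icc a b)) :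
    ∃ L, Tendsto F (𝓝[<] b) (𝓝 L) := by
  set Φ : ℝ → ℝ := fun r => F a + ∫ t in a..r, G t
  have hΦ : ContinuousOn Φ (Icc a b) := by
    refine continuousOn_const.add ?_
    rw [← uIcc_of_le hab.le]
    exact intervalIntegral.continuousOn_primitive_interval'
      (hG.intervalIntegrable_of_Icc hab.le) left_mem_uIcc
  have hFΦ : ∀ r ∈ Ico a b, F r = Φ r := fun r hr => by
    have hsub : Icc a r ⊆ Ico a b := Icc_subset_Ico_right hr.2
    show F r = F a + _
    rw [intervalIntegral.integral_eq_sub_of_hasDerivAt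
      (fun t ht => hF t (hsub (by rwa [uIcc_of_le hr.1] at ht)))
      ((hG.mono (hsub.trans Ico_subset_Icc_self)).intervalIntegrable_of_Icc hr.1)]
    ring
  refine ⟨Φ b, (tendsto_nhdsLT_of_continuousOn_Icc hΦ hab).congr' ?_⟩
  filter_upwards [Ioo_mem_nhdsLT hab] with r hr using (hFΦ r (Ioo_subset_Ico_self hr)).symm

lemma eqOn_zero_of_hasDerivAt_ge_neg_mul {E E' : ℝ → ℝ} {K : ℝ}
    (hE : ∀ r ∈ Ico a b, HasDerivAt E (E' r) r) (hE' : ∀ r ∈ Ico a b, -(K * E r) ≤ E' r)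
    (hE₀ : ∀ r ∈ Ico a b, 0 ≤ E r) (hlim : Tendsto E (𝓝[<] b) (𝓝 0)) :
    EqOn E 0 (Ico a b) := by
  set g : ℝ → ℝ := fun r => exp (K * r) * E r
  set g' : ℝ → ℝ := fun r => exp (K * r) * (K * E r + E' r)
  have hg : ∀ r ∈ Ico a b, HasDerivAt g (g' r) r := fun r hr => by
    refine (((hasDerivAt_id r).const_mul K).exp.mul (hE r hr)).congr_deriv ?_
    simp only [g', id, mul_one]
    ring
  have hmono : MonotoneOn g (Ico a b) := by
    refine monotoneOn_of_hasDerivWithinAt_nonneg (f' := g') (convex_Ico a b)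
      (fun r hr => (hg r hr).continuousAt.continuousWithinAt) ?_ ?_ <;> rw [interior_Ico]
    · exact fun r hr => (hg r (Ioo_subset_Ico_self hr)).hasDerivWithinAt
    · intro r hr
      have : 0 ≤ K * E r + E' r := by linarith [hE' r (Ioo_subset_Ico_self hr)]
      positivity
  have hglim : Tendsto g (𝓝[<] b) (𝓝 0) := by
    have hexp : Tendsto (fun r => exp (K * r)) (𝓝[<] b) (𝓝 (exp (K * b))) :=
      (continuous_exp.comp (continuous_const_mul K)).continuousAt.tendsto.mono_left
        nhdsWithin_le_nhds
    simpa using hexp.mul hlim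
  intro r hr
  have hgr : g r ≤ 0 := ge_of_tendsto hglim <| by
    filter_upwards [Ioo_mem_nhdsLT hr.2] with x hx
    exact hmono hr ⟨hr.1.trans hx.1.le, hx.2⟩ hx.1.le
  have := hE₀ r hr
  have := exp_pos (K * r)
  show E r = 0
  nlinarith

lemma exists_eqOn_zero_of_mul_eq_mul {y dy z dz : ℝ → ℝ} {L : ℝ} (hab : a < b)
    (hy : ∀ r ∈ Ioo a b, HasDerivAt y (dy r) r) (hz : ∀ r ∈ Ioo a b, HasDerivAt z (dz r) r)
    (hW : ∀ r ∈ Ioo a b, y r * dz r = z r * dy r) (hylim : Tendsto y (𝓝[<] b) (𝓝 0))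
    (hzlim : Tendsto z (𝓝[<] b) (𝓝 L)) (hL : L ≠ 0) :
    ∃ c < b, EqOn y 0 (Ioo c b) := by
  obtain ⟨c₀, hc₀, hzne⟩ := mem_nhdsLT_iff_exists_Ioo_subset.mp (hzlim.eventually_ne hL)
  set c := max a c₀
  have hcb : c < b := max_lt hab hc₀
  have hsub : Ioo c b ⊆ Ioo a b := Ioo_subset_Ioo_left (le_max_left a c₀)
  have hz₀ : ∀ r ∈ Ioo c b, z r ≠ 0 := fun r hr =>
    hzne (Ioo_subset_Ioo_left (le_max_right a c₀) hr)
  have hQ : ∀ r ∈ Ioo c b, HasDerivAt (fun t => y t / z t) 0 r := fun r hr => by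
    refine ((hy r (hsub hr)).div (hz r (hsub hr)) (hz₀ r hr)).congr_deriv ?_
    rw [hW r (hsub hr)]
    ring
  have hQlim : Tendsto (fun t => y t / z t) (𝓝[<] b) (𝓝 0) := by
    rw [← zero_div L]
    exact hylim.div hzlim hL
  refine ⟨c, hcb, fun r hr => ?_⟩
  have hev : (fun t => y t / z t) =ᶠ[𝓝[<] b] fun _ => y r / z r := by
    filter_upwards [Ioo_mem_nhdsLT hcb] with t ht
    exact isOpen_Ioo.is_const_of_deriv_eq_zero isPreconnected_Ioo
      (fun x hx => (hQ x hx).differentiableAt.differentiableWithinAt)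
      (fun x hx => (hQ x hx).deriv) ht hr
  have : y r / z r = 0 := tendsto_nhds_unique (tendsto_const_nhds.congr' hev.symm) hQlim
  simpa [hz₀ r hr] using this

lemma ContDiffOn.hasDerivAt_deriv {g : ℝ → ℝ} {s : Set ℝ} (hg : ContDiffOn ℝ 2 g s)
    (hs : IsOpen s) {t : ℝ} (ht : t ∈ s) : HasDerivAt g (deriv g t) t :=
  ((hg.contDiffAt (hs.mem_nhds ht)).differentiableAt two_ne_zero).hasDerivAt

lemma ContDiffOn.hasDerivAt_deriv_deriv {g : ℝ → ℝ} {s : Set ℝ} (hg : ContDiffOn ℝ 2 g s)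
    (hs : IsOpen s) {t : ℝ} (ht : t ∈ s) : HasDerivAt (deriv g) (deriv (deriv g) t) t :=
  (((hg.deriv_of_isOpen hs one_add_one_eq_two.le).contDiffAt
    (hs.mem_nhds ht)).differentiableAt one_ne_zero).hasDerivAt

lemma hasDerivAt_comp_add_smul {E : Type*} [NormedAddCommGroup E] [NormedSpace ℝ E]
    {F : E → ℝ} {x v : E} {t : ℝ} (hF : DifferentiableAt ℝ F (x + t • v)) :
    HasDerivAt (fun s : ℝ => F (x + s • v)) (fderiv ℝ F (x + t • v) v) t := by
  have := hF.hasFDerivAt.comp_hasDerivAt t (((hasDerivAt_id t).smul_const v).const_add x)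
  rwa [one_smul] at this

lemma fderiv_fderiv_apply_eq_of_hasDerivAt {E : Type*} [NormedAddCommGroup E]
    [NormedSpace ℝ E] {F : E → ℝ} {x v : E} {D : ℝ} (hd : DifferentiableAt ℝ (fderiv ℝ F) x)
    (hD : HasDerivAt (fun t : ℝ => fderiv ℝ F (x + t • v) v) D 0) :
    fderiv ℝ (fun y => fderiv ℝ F y v) x v = D := by
  have hd' : DifferentiableAt ℝ (fun y => fderiv ℝ F y v) (x + (0 : ℝ) • v) := by
    rw [zero_smul, add_zero]
    exact (ContinuousLinearMap.apply ℝ ℝ v).differentiableAt.comp x hd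
  simpa using (hasDerivAt_comp_add_smul hd').unique hD

end Calculus

section RadialODE

variable {m y dy z dz : ℝ → ℝ} {s s' : Set ℝ} {a b : ℝ}

/-- `y'' + y' / r + m y = 0`, the radial form of `-Δy = m y` in the plane, written as a
first-order system for `(y, dy)`. -/
def SolvesRadialODE (m : ℝ → ℝ) (s : Set ℝ) (y dy : ℝ → ℝ) : Prop :=
  ∀ r ∈ s, HasDerivAt y (dy r) r ∧ HasDerivAt dy (-dy r / r - m r * y r) r

lemma SolvesRadialODE.mono (h : SolvesRadialODE m s y dy) (hs' : s' ⊆ s) :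
    SolvesRadialODE m s' y dy :=
  fun r hr => h r (hs' hr)

lemma neg_mul_le_radial_energy_deriv {r C μ x y : ℝ} (ha : 0 < a) (har : a ≤ r)
    (hμ : |μ| ≤ C) :
    -((1 + C + 2 / a) * (x ^ 2 + y ^ 2)) ≤ 2 * x * y + 2 * y * (-y / r - μ * x) := by
  have hr : 0 < r := ha.trans_le har
  have hxy : 2 * |x * y| ≤ x ^ 2 + y ^ 2 := by
    rw [abs_mul]
    nlinarith [sq_nonneg (|x| - |y|), sq_abs x, sq_abs y]
  have hμxy : 2 * (μ * (x * y)) ≤ C * (x ^ 2 + y ^ 2) := by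
    have := le_abs_self (μ * (x * y))
    rw [abs_mul] at this
    nlinarith [abs_nonneg μ, abs_nonneg (x * y)]
  have hy : y ^ 2 / r ≤ (x ^ 2 + y ^ 2) / a := by
    gcongr
    nlinarith [sq_nonneg x]
  have : 2 / a * (x ^ 2 + y ^ 2) = 2 * ((x ^ 2 + y ^ 2) / a) := by ring
  have : 2 * y * (-y / r - μ * x) = -(2 * (y ^ 2 / r)) - 2 * (μ * (x * y)) := by ring
  nlinarith [sq_nonneg (x + y)]

lemma SolvesRadialODE.eqOn_zero_of_tendsto (h : SolvesRadialODE m (Ico a b) y dy)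
    (ha : 0 < a) (hm : ContinuousOn m (Icc a b))
    (hlim : Tendsto (fun r => y r ^ 2 + dy r ^ 2) (𝓝[<] b) (𝓝 0)) : EqOn y 0 (Ico a b) := by
  obtain ⟨C, hC⟩ := isCompact_Icc.exists_bound_of_continuousOn hm
  have hE := eqOn_zero_of_hasDerivAt_ge_neg_mul (E := fun r => y r ^ 2 + dy r ^ 2)
    (E' := fun r => 2 * y r * dy r + 2 * dy r * (-dy r / r - m r * y r))
    (fun r hr => (((h r hr).1.pow 2).add ((h r hr).2.pow 2)).congr_deriv (by simp))
    (fun r hr => neg_mul_le_radial_energy_deriv ha hr.1 (hC r (Ico_subset_Icc_self hr)))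
    (fun r _ => by positivity) hlim
  intro r hr
  have := hE hr
  simp only [Pi.zero_apply] at this ⊢
  nlinarith [sq_nonneg (y r), sq_nonneg (dy r)]

lemma SolvesRadialODE.eqOn_zero_of_tendsto_zero (h : SolvesRadialODE m (Ioo 0 b) y dy)
    (hm : ContinuousOn m (Ioc 0 b)) (hy : Tendsto y (𝓝[<] b) (𝓝 0))
    (hdy : Tendsto dy (𝓝[<] b) (𝓝 0)) : EqOn y 0 (Ioo 0 b) := fun r hr =>
  (h.mono (Ico_subset_Ioo_left hr.1)).eqOn_zero_of_tendsto hr.1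
    (hm.mono (Icc_subset_Ioc hr.1 le_rfl)) (by simpa using (hy.pow 2).add (hdy.pow 2))
    ⟨le_rfl, hr.2⟩

lemma SolvesRadialODE.eqOn_Icc_zero (h : SolvesRadialODE m (Ioo 0 b) y dy)
    (hm : ContinuousOn m (Ioc 0 b)) (hyc : ContinuousOn y (Icc 0 b)) (hb : 0 < b)
    (hy : Tendsto y (𝓝[<] b) (𝓝 0)) (hdy : Tendsto dy (𝓝[<] b) (𝓝 0)) :
    EqOn y 0 (Icc 0 b) :=
  (h.eqOn_zero_of_tendsto_zero hm hy hdy).of_subset_closure hyc continuousOn_const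
    Ioo_subset_Icc_self (closure_Ioo hb.ne).ge

lemma SolvesRadialODE.eqOn_Icc_zero_of_eqOn {c : ℝ} (h : SolvesRadialODE m (Ioo 0 b) y dy)
    (hm : ContinuousOn m (Ioc 0 b)) (hyc : ContinuousOn y (Icc 0 b)) (hb : 0 < b)
    (hcb : c < b) (hy : EqOn y 0 (Ioo c b)) : EqOn y 0 (Icc 0 b) := by
  have hmem : Ioo (max c 0) b ∈ 𝓝[<] b := Ioo_mem_nhdsLT (max_lt hcb hb)
  have hsub : Ioo (max c 0) b ⊆ Ioo c b := Ioo_subset_Ioo_left (le_max_left c 0)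
  refine h.eqOn_Icc_zero hm hyc hb (tendsto_const_nhds.congr' ?_)
    (tendsto_const_nhds.congr' ?_)
  · filter_upwards [hmem] with r hr using (hy (hsub hr)).symm
  · filter_upwards [hmem] with r hr
    have hloc : y =ᶠ[𝓝 r] fun _ => 0 :=
      eventually_of_mem (isOpen_Ioo.mem_nhds hr) fun t ht => hy (hsub ht)
    exact ((hasDerivAt_const r (0 : ℝ)).congr_of_eventuallyEq hloc).unique
      (h r ⟨lt_of_le_of_lt (le_max_right c 0) hr.1, hr.2⟩).1

lemma SolvesRadialODE.exists_tendsto_deriv_ne_zero (h : SolvesRadialODE m (Ioo 0 b) y dy)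
    (hm : ContinuousOn m (Ioc 0 b)) (hyc : ContinuousOn y (Icc 0 b)) (hb : 0 < b)
    (hy₀ : y 0 ≠ 0) (hyb : y b = 0) : ∃ L ≠ 0, Tendsto dy (𝓝[<] b) (𝓝 L) := by
  have hsub : Icc (b / 2) b ⊆ Ioc 0 b := Icc_subset_Ioc (by linarith) le_rfl
  obtain ⟨L, hL⟩ := exists_tendsto_nhdsLT_of_hasDerivAt (F := fun r => r * dy r)
    (G := fun r => -(r * (m r * y r))) (by linarith)
    (fun r hr => by
      have hr' : r ∈ Ioo 0 b := ⟨by linarith [hr.1], hr.2⟩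
      have := hr'.1.ne'
      refine ((hasDerivAt_id r).mul (h r hr').2).congr_deriv ?_
      simp only [id]
      field_simp
      ring)
    (continuousOn_id.mul ((hm.mono hsub).mul (hyc.mono (hsub.trans Ioc_subset_Icc_self)))).neg
  have hdy : Tendsto dy (𝓝[<] b) (𝓝 (L / b)) := by
    refine (hL.div (tendsto_id.mono_left nhdsWithin_le_nhds) hb.ne').congr' ?_
    filter_upwards [Ioo_mem_nhdsLT hb] with r hr
    simp [hr.1.ne']
  refine ⟨L / b, fun hL₀ => hy₀ ?_, hdy⟩
  exact h.eqOn_Icc_zero hm hyc hb (hyb ▸ tendsto_nhdsLT_of_continuousOn_Icc hyc hb)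
    (hL₀ ▸ hdy) ⟨le_rfl, hb.le⟩

lemma SolvesRadialODE.hasDerivAt_wronskian (hy : SolvesRadialODE m s y dy)
    (hz : SolvesRadialODE m s z dz) {r : ℝ} (hr : r ∈ s) (hr₀ : r ≠ 0) :
    HasDerivAt (fun t => t * (y t * dz t - z t * dy t)) 0 r := by
  obtain ⟨hy₁, hy₂⟩ := hy r hr
  obtain ⟨hz₁, hz₂⟩ := hz r hr
  refine ((hasDerivAt_id r).mul ((hy₁.mul hz₂).sub (hz₁.mul hy₂))).congr_deriv ?_
  simp only [id, Pi.sub_apply, Pi.mul_apply]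
  field_simp
  ring

lemma SolvesRadialODE.mul_eq_mul_of_continuousOn (hy : SolvesRadialODE m (Ioo 0 b) y dy)
    (hz : SolvesRadialODE m (Ioo 0 b) z dz) (hyc : ContinuousOn y (Ico 0 b))
    (hdyc : ContinuousOn dy (Ico 0 b)) (hzc : ContinuousOn z (Ico 0 b))
    (hdzc : ContinuousOn dz (Ico 0 b)) {r : ℝ} (hr : r ∈ Ioo 0 b) :
    y r * dz r = z r * dy r := by
  set W : ℝ → ℝ := fun t => t * (y t * dz t - z t * dy t)
  have hW : ∀ t ∈ Ioo 0 b, HasDerivAt W 0 t := fun t ht =>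
    hy.hasDerivAt_wronskian hz ht ht.1.ne'
  have hconst : EqOn W (fun _ => W r) (Ioo 0 b) := fun t ht =>
    isOpen_Ioo.is_const_of_deriv_eq_zero isPreconnected_Ioo
      (fun x hx => (hW x hx).differentiableAt.differentiableWithinAt)
      (fun x hx => (hW x hx).deriv) ht hr
  have hWc : ContinuousOn W (Ico 0 b) :=
    continuousOn_id.mul ((hyc.mul hdzc).sub (hzc.mul hdyc))
  have hb : 0 < b := hr.1.trans hr.2
  have h0 : W 0 = W r := hconst.of_subset_closure hWc continuousOn_const Ioo_subset_Ico_self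
    (by rw [closure_Ioo hb.ne]; exact Ico_subset_Icc_self) ⟨le_rfl, hb⟩
  have : r * (y r * dz r - z r * dy r) = 0 := by simpa [W] using h0.symm
  have := (mul_eq_zero.mp this).resolve_left hr.1.ne'
  linarith

section LaneEmden

variable {p : ℝ} {f df q dq : ℝ → ℝ}

lemma SolvesRadialODE.scaling (hp : 1 < p)
    (hf : SolvesRadialODE (fun r => |f r| ^ (p - 1)) s f df) (hs : (0 : ℝ) ∉ s) :
    SolvesRadialODE (fun r => p * |f r| ^ (p - 1)) s (fun r => r * df r + 2 / (p - 1) * f r)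
      (fun r => 2 / (p - 1) * df r - r * (|f r| ^ (p - 1) * f r)) := by
  intro r hr
  obtain ⟨hf₁, hf₂⟩ := hf r hr
  have hr₀ : r ≠ 0 := fun h => hs (h ▸ hr)
  have hp₁ : p - 1 ≠ 0 := by linarith
  have hφ := (hasDerivAt_abs_rpow_sub_one_mul hp (f r)).comp r hf₁
  constructor
  · refine (((hasDerivAt_id r).mul hf₂).add (hf₁.const_mul _)).congr_deriv ?_
    simp only [id]
    field_simp
    ring
  · refine ((hf₂.const_mul _).sub ((hasDerivAt_id r).mul hφ)).congr_deriv ?_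
    simp only [id, Function.comp]
    field_simp
    ring

theorem SolvesRadialODE.eqOn_zero_of_linearized (hp : 1 < p)
    (hf : SolvesRadialODE (fun r => |f r| ^ (p - 1)) (Ioo 0 1) f df)
    (hq : SolvesRadialODE (fun r => p * |f r| ^ (p - 1)) (Ioo 0 1) q dq)
    (hfc : ContinuousOn f (Icc 0 1)) (hdfc : ContinuousOn df (Ico 0 1))
    (hqc : ContinuousOn q (Icc 0 1)) (hdqc : ContinuousOn dq (Ico 0 1))
    (hf₀ : f 0 ≠ 0) (hf₁ : f 1 = 0) (hq₁ : q 1 = 0) : EqOn q 0 (Icc 0 1) := by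
  have hm : ContinuousOn (fun r => |f r| ^ (p - 1)) (Icc 0 1) :=
    hfc.abs.rpow_const fun _ _ => Or.inr (by linarith)
  obtain ⟨L, hL, hdfL⟩ :=
    hf.exists_tendsto_deriv_ne_zero (hm.mono Ioc_subset_Icc_self) hfc one_pos hf₀ hf₁
  set w : ℝ → ℝ := fun r => r * df r + 2 / (p - 1) * f r
  set dw : ℝ → ℝ := fun r => 2 / (p - 1) * df r - r * (|f r| ^ (p - 1) * f r)
  have hw : SolvesRadialODE (fun r => p * |f r| ^ (p - 1)) (Ioo 0 1) w dw :=
    hf.scaling hp fun h => h.1.false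
  have hfc' : ContinuousOn f (Ico 0 1) := hfc.mono Ico_subset_Icc_self
  have hwc : ContinuousOn w (Ico 0 1) :=
    (continuousOn_id.mul hdfc).add (continuousOn_const.mul hfc')
  have hdwc : ContinuousOn dw (Ico 0 1) := (continuousOn_const.mul hdfc).sub
    (continuousOn_id.mul ((hm.mono Ico_subset_Icc_self).mul hfc'))
  have hwL : Tendsto w (𝓝[<] 1) (𝓝 L) := by
    simpa [w, hf₁] using ((tendsto_id.mono_left nhdsWithin_le_nhds).mul hdfL).add
      ((tendsto_nhdsLT_of_continuousOn_Icc hfc one_pos).const_mul (2 / (p - 1)))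
  obtain ⟨c, hc, hq_zero⟩ := exists_eqOn_zero_of_mul_eq_mul one_pos (fun r hr => (hq r hr).1)
    (fun r hr => (hw r hr).1)
    (fun r => hq.mul_eq_mul_of_continuousOn hw (hqc.mono Ico_subset_Icc_self) hdqc hwc hdwc)
    (hq₁ ▸ tendsto_nhdsLT_of_continuousOn_Icc hqc one_pos) hwL hL
  exact hq.eqOn_Icc_zero_of_eqOn ((continuousOn_const.mul hm).mono Ioc_subset_Icc_self) hqc
    one_pos hc hq_zero

end LaneEmden

end RadialODE

section Profile

local notation "e₀" => EuclideanSpace.single (0 : Fin 2) (1 : ℝ)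
local notation "e₁" => EuclideanSpace.single (1 : Fin 2) (1 : ℝ)

def radialProfile (h : Plane → ℝ) (t : ℝ) : ℝ := h (t • e₀)

lemma norm_smul_e₀ (t : ℝ) : ‖t • e₀‖ = |t| := by
  simp [norm_smul]

lemma norm_smul_e₀_add_smul_e₁ (r t : ℝ) : ‖r • e₀ + t • e₁‖ = √(r ^ 2 + t ^ 2) := by
  simp [EuclideanSpace.norm_eq, Fin.sum_univ_two, sq_abs]

lemma smul_e₀_mem_unitBall {t : ℝ} (ht : t ∈ Ioo (-1) 1) : t • e₀ ∈ unitBall := by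
  simpa [unitBall, norm_smul_e₀, abs_lt] using ht

variable {h : Plane → ℝ}

lemma IsRadial.eq_radialProfile_norm (hrad : IsRadial h) (x : Plane) :
    h x = radialProfile h ‖x‖ :=
  hrad _ _ (by rw [norm_smul_e₀, abs_norm])

lemma radialProfile_one (hb : ∀ x ∈ frontier unitBall, h x = 0) : radialProfile h 1 = 0 :=
  hb _ (by simp [unitBall, frontier_ball _ one_ne_zero])

lemma continuousOn_radialProfile (hc : ContinuousOn h (closure unitBall)) :
    ContinuousOn (radialProfile h) (Icc 0 1) := by
  refine hc.comp (continuous_id.smul continuous_const).continuousOn fun t ht => ?_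
  rw [unitBall, closure_ball _ one_ne_zero, mem_closedBall_zero_iff, norm_smul_e₀,
    abs_of_nonneg ht.1]
  exact ht.2

lemma contDiffOn_radialProfile (hs : ContDiffOn ℝ 2 h unitBall) :
    ContDiffOn ℝ 2 (radialProfile h) (Ioo (-1) 1) :=
  hs.comp (contDiff_id.smul contDiff_const).contDiffOn fun _ ht => smul_e₀_mem_unitBall ht

lemma continuousOn_deriv_radialProfile (hs : ContDiffOn ℝ 2 h unitBall) :
    ContinuousOn (deriv (radialProfile h)) (Ico 0 1) :=
  ((contDiffOn_radialProfile hs).continuousOn_deriv_of_isOpen isOpen_Ioo (by norm_num)).mono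
    fun _ ht => ⟨by linarith [ht.1], ht.2⟩

lemma differentiableAt_of_mem_unitBall (hs : ContDiffOn ℝ 2 h unitBall) {x : Plane}
    (hx : x ∈ unitBall) : DifferentiableAt ℝ h x :=
  (hs.contDiffAt (isOpen_ball.mem_nhds hx)).differentiableAt two_ne_zero

lemma differentiableAt_fderiv_of_mem_unitBall (hs : ContDiffOn ℝ 2 h unitBall)
    {x : Plane} (hx : x ∈ unitBall) :
    DifferentiableAt ℝ (fderiv ℝ h) x :=
  ((hs.fderiv_of_isOpen isOpen_ball one_add_one_eq_two.le).contDiffAt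
    (isOpen_ball.mem_nhds hx)).differentiableAt one_ne_zero

lemma hasDerivAt_radialProfile (hs : ContDiffOn ℝ 2 h unitBall) {t : ℝ} (ht : t ∈ Ioo (-1) 1) :
    HasDerivAt (radialProfile h) (fderiv ℝ h (t • e₀) e₀) t := by
  have := (differentiableAt_of_mem_unitBall hs (smul_e₀_mem_unitBall ht)).hasFDerivAt
    |>.comp_hasDerivAt t ((hasDerivAt_id t).smul_const e₀)
  rwa [one_smul] at this

lemma fderiv_fderiv_e₀_eq_deriv_deriv (hs : ContDiffOn ℝ 2 h unitBall) {r : ℝ}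
    (hr : r ∈ Ioo (-1) 1) :
    fderiv ℝ (fun y => fderiv ℝ h y e₀) (r • e₀) e₀ = deriv (deriv (radialProfile h)) r := by
  refine fderiv_fderiv_apply_eq_of_hasDerivAt
    (differentiableAt_fderiv_of_mem_unitBall hs (smul_e₀_mem_unitBall hr)) ?_
  have hr' : r + 0 ∈ Ioo (-1) 1 := by rwa [add_zero]
  have hD := ((contDiffOn_radialProfile hs).hasDerivAt_deriv_deriv isOpen_Ioo hr').comp 0
    ((hasDerivAt_id 0).const_add r)
  rw [add_zero, mul_one] at hD
  refine hD.congr_of_eventuallyEq ?_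
  filter_upwards [(continuous_const_add r).continuousAt.preimage_mem_nhds
    (isOpen_Ioo.mem_nhds hr')] with t ht
  rw [← add_smul]
  exact ((hasDerivAt_radialProfile hs ht).deriv).symm

lemma fderiv_fderiv_e₁_eq_deriv_div (hs : ContDiffOn ℝ 2 h unitBall) (hrad : IsRadial h) {r : ℝ}
    (hr : r ∈ Ioo 0 1) :
    fderiv ℝ (fun y => fderiv ℝ h y e₁) (r • e₀) e₁ = deriv (radialProfile h) r / r := by
  set g := radialProfile h
  set ρ : ℝ → ℝ := fun t => √(r ^ 2 + t ^ 2)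
  have hr₀ : r ≠ 0 := hr.1.ne'
  have hr' : r ∈ Ioo (-1) 1 := ⟨by linarith [hr.1], hr.2⟩
  have hsq_pos : ∀ t, 0 < r ^ 2 + t ^ 2 := fun t => by positivity
  have hρ_pos : ∀ t, 0 < ρ t := fun t => sqrt_pos.2 (hsq_pos t)
  have hρ : ∀ t, HasDerivAt ρ (t / ρ t) t := fun t => by
    refine (((hasDerivAt_pow 2 t).const_add (r ^ 2)).sqrt (hsq_pos t).ne').congr_deriv ?_
    simp only [ρ]
    field_simp
    norm_num
  have hρ₀ : ρ 0 = r := by simp [ρ, sqrt_sq hr.1.le]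
  have hρ_mem : ∀ᶠ t in 𝓝 0, ρ t ∈ Ioo (-1) 1 :=
    (hρ 0).continuousAt.preimage_mem_nhds (isOpen_Ioo.mem_nhds (hρ₀ ▸ hr'))
  have hsymm : (fun t : ℝ => h (r • e₀ + t • e₁)) = g ∘ ρ := funext fun t =>
    hrad _ _ (by rw [norm_smul_e₀_add_smul_e₁, norm_smul_e₀, abs_of_pos (hρ_pos t)])
  have hline : ∀ᶠ t in 𝓝 0, fderiv ℝ h (r • e₀ + t • e₁) e₁ = deriv g (ρ t) * (t / ρ t) := by
    filter_upwards [hρ_mem] with t ht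
    have hmem : r • e₀ + t • e₁ ∈ unitBall := by
      simpa [unitBall, norm_smul_e₀_add_smul_e₁] using ht.2
    have h₁ := hasDerivAt_comp_add_smul (differentiableAt_of_mem_unitBall hs hmem)
    rw [hsymm] at h₁
    exact h₁.unique (((contDiffOn_radialProfile hs).hasDerivAt_deriv isOpen_Ioo ht).comp t (hρ t))
  refine fderiv_fderiv_apply_eq_of_hasDerivAt
    (differentiableAt_fderiv_of_mem_unitBall hs (smul_e₀_mem_unitBall hr')) ?_
  have hD := (((contDiffOn_radialProfile hs).hasDerivAt_deriv_deriv isOpen_Ioo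
    (hρ₀ ▸ hr')).comp 0 (hρ 0)).mul ((hasDerivAt_id 0).div (hρ 0) (hρ_pos 0).ne')
  refine (hD.congr_deriv ?_).congr_of_eventuallyEq hline
  simp only [Function.comp_apply, Pi.div_apply, id, hρ₀]
  field_simp
  ring

lemma lap_smul_e₀_eq (hs : ContDiffOn ℝ 2 h unitBall) (hrad : IsRadial h) {r : ℝ}
    (hr : r ∈ Ioo 0 1) :
    lap h (r • e₀) = deriv (deriv (radialProfile h)) r + deriv (radialProfile h) r / r := by
  rw [lap, Fin.sum_univ_two, fderiv_fderiv_e₀_eq_deriv_deriv hs ⟨by linarith [hr.1], hr.2⟩,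
    fderiv_fderiv_e₁_eq_deriv_div hs hrad hr]

lemma solvesRadialODE_radialProfile {c : Plane → ℝ} (hs : ContDiffOn ℝ 2 h unitBall)
    (hrad : IsRadial h)
    (heq : ∀ x ∈ unitBall, -lap h x = c x * h x) :
    SolvesRadialODE (fun r => c (r • e₀)) (Ioo 0 1) (radialProfile h)
      (deriv (radialProfile h)) := by
  intro r hr
  have hr' : r ∈ Ioo (-1) 1 := ⟨by linarith [hr.1], hr.2⟩
  have hg := contDiffOn_radialProfile hs
  refine ⟨hg.hasDerivAt_deriv isOpen_Ioo hr', ?_⟩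
  have hode := heq _ (smul_e₀_mem_unitBall hr')
  rw [lap_smul_e₀_eq hs hrad hr] at hode
  convert hg.hasDerivAt_deriv_deriv isOpen_Ioo hr' using 1
  rw [neg_div, radialProfile]
  linarith

end Profile

theorem radially_nondegenerate (p : ℝ) (hp : 1 < p) (u : Plane → ℝ)
    (hu : IsRadialNodalSol p u) (v : Plane → ℝ) (hv : IsLinearizedSol p u v)
    (hrad : IsRadial v) : ∀ x ∈ closure unitBall, v x = 0 := by
  obtain ⟨hu_sol, hu_rad, -, hu₀⟩ := hu
  obtain ⟨hv_smooth, hv_cont, hv_eqn, hv_bdry⟩ := hv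
  have hf := solvesRadialODE_radialProfile hu_sol.smooth hu_rad hu_sol.eqn
  have hq := solvesRadialODE_radialProfile hv_smooth hrad hv_eqn
  have hq_zero := hf.eqOn_zero_of_linearized hp hq
    (continuousOn_radialProfile hu_sol.cont) (continuousOn_deriv_radialProfile hu_sol.smooth)
    (continuousOn_radialProfile hv_cont) (continuousOn_deriv_radialProfile hv_smooth)
    (by simpa [radialProfile] using hu₀.ne') (radialProfile_one hu_sol.bdry)
    (radialProfile_one hv_bdry)
  intro x hx
  rw [hrad.eq_radialProfile_norm x]
  exact hq_zero ⟨norm_nonneg x, by simpa [unitBall, closure_ball] using hx⟩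

end
end
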